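/- Let $d \ge 1$, $\epsilon \in \mathbb{R}$, let $\psi : \mathbb{R}^d \to \mathbb{C}$ be a Schwartz function, let $c : \mathbb{Z}^d \times \mathbb{Z}^d \to \mathbb{C}$ be summable, define $V(x_1,x_2) := \sum_{(n,m)} c(n,m) e^{i(2\pi n\cdot x_1 + 2\pi m \cdot x_2)}$ and $\hat\psi(\xi) := \int_{\mathbb{R}^d} e^{-i\xi\cdot x}\psi(x)\,dx$. Fix $\xi \in \mathbb{R}^d$ and define the unfolding $(\mathcal{T}_\xi \hat\psi)(n,m) := \hat\psi(\xi + 2\pi n + 2\pi(1+\epsilon)m)$ for $(n,m) \in \mathbb{Z}^d \times \mathbb{Z}^d$. Then for every $(n,m) \in \mathbb{Z}^d \times \mathbb{Z}^d$, $\int_{\mathbb{R}^d} e^{-i(\xi + 2\pi n + 2\pi(1+\epsilon)m)\cdot x}\Big(-\tfrac12\Delta\psi(x) + V(x,(1+\epsilon)x)\psi(x)\Big)dx = \tfrac12\big|\xi + 2\pi n + 2\pi(1+\epsilon)m\big|^2 (\mathcal{T}_\xi\hat\psi)(n,m) + \sum_{(n',m') \in \mathbb{Z}^d\times\mathbb{Z}^d}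 c(n-n', m-m')\,(\mathcal{T}_\xi\hat\psi)(n',m')$, the series being absolutely convergent. In other words, $\mathcal{T}_\xi[\mathcal{F}(H_\epsilon\psi)] = \widehat H_\epsilon(\xi)\, \mathcal{T}_\xi\mathcal{F}\psi$, where $[\widehat H_\epsilon(\xi)]_{(n,m),(n',m')} = \tfrac12|\xi + 2\pi n + 2\pi(1+\epsilon)m|^2 \delta_{(n,m),(n',m')} + c(n-n',m-m')$. -/

import Mathlib

open MeasureTheory Real RealInnerProductSpace

noncomputable section

/-- The embedding of a `ℤ^d`-vector into `ℝ^d` (Euclidean space). -/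
def intVec (d : ℕ) (n : Fin d → ℤ) : EuclideanSpace ℝ (Fin d) := WithLp.toLp 2 (fun i => (n i : ℝ))

/-- The Laplacian of `ψ : ℝ^d → ℂ`, as a sum of second derivatives in the
coordinate directions. -/
def laplacian {d : ℕ} (ψ : EuclideanSpace ℝ (Fin d) → ℂ)
    (x : EuclideanSpace ℝ (Fin d)) : ℂ :=
  ∑ i : Fin d,
    fderiv ℝ (fun y => fderiv ℝ ψ y (EuclideanSpace.single i 1)) x
      (EuclideanSpace.single i 1)

/-!
With `ψ̂(η) = ∫ e^{-i⟪η,x⟫} ψ(x) dx`, the Laplacian becomes multiplication by `-‖η‖²` (the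
Fourier-multiplier description of `Δ` on Schwartz space, rescaled from the `2π`-normalized
transform), and multiplication by `V(x, (1+ε)x) = ∑ₖ c k e^{i⟪ωₖ,x⟫}` with
`ω_(n,m) = 2πn + 2π(1+ε)m` becomes `η ↦ ∑ₖ c k ψ̂(η - ωₖ)`; sum and integral commute because `c`
is absolutely summable and `ψ` integrable. At `η = ξ + ω_(n,m)` the substitution
`k ↦ (n,m) - k` turns this into the lattice convolution, as `ω` is additive.
-/

open Complex FourierTransform
open scoped Laplacian

theorem norm_exp_neg_I_mul_ofReal (r : ℝ) : ‖exp (-I * r)‖ = 1 := by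
  simpa using norm_exp_I_mul_ofReal (-r)

section Character

variable {E : Type*} [NormedAddCommGroup E] [InnerProductSpace ℝ E]
variable {ι : Type*} {a : ι → ℂ}

theorem continuous_tsum_mul_exp_I_inner (ha : Summable a) (ω : ι → E) :
    Continuous fun x : E => ∑' k, a k * exp (I * ((⟪ω k, x⟫ : ℝ) : ℂ)) :=
  continuous_tsum (fun k => by fun_prop) (summable_norm_iff.mpr ha)
    fun k x => by rw [norm_mul, norm_exp_I_mul_ofReal, mul_one]

theorem norm_tsum_mul_exp_I_inner_le (ha : Summable a) (ω : ι → E) (x : E) :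
    ‖∑' k, a k * exp (I * ((⟪ω k, x⟫ : ℝ) : ℂ))‖ ≤ ∑' k, ‖a k‖ := by
  refine (norm_tsum_le_tsum_norm ?_).trans_eq (tsum_congr fun k => ?_) <;>
    simp_rw [norm_mul, norm_exp_I_mul_ofReal, mul_one]
  exact summable_norm_iff.mpr ha

variable [MeasurableSpace E] {μ : Measure E} {f : E → ℂ}

theorem norm_integral_exp_neg_I_inner_mul_le (η : E) :
    ‖∫ x, exp (-I * ((⟪η, x⟫ : ℝ) : ℂ)) * f x ∂μ‖ ≤ ∫ x, ‖f x‖ ∂μ :=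
  (norm_integral_le_integral_norm _).trans_eq <| by
    simp_rw [norm_mul, norm_exp_neg_I_mul_ofReal, one_mul]

variable [BorelSpace E]

theorem MeasureTheory.Integrable.tsum_mul_exp_I_inner_mul (ha : Summable a) (ω : ι → E)
    (hf : Integrable f μ) :
    Integrable (fun x => (∑' k, a k * exp (I * ((⟪ω k, x⟫ : ℝ) : ℂ))) * f x) μ :=
  hf.bdd_mul (continuous_tsum_mul_exp_I_inner ha ω).aestronglyMeasurable
    (.of_forall (norm_tsum_mul_exp_I_inner_le ha ω))

theorem MeasureTheory.Integrable.exp_neg_I_inner_mul (hf : Integrable f μ) (η : E) :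
    Integrable (fun x => exp (-I * ((⟪η, x⟫ : ℝ) : ℂ)) * f x) μ :=
  hf.bdd_mul
    (by fun_prop : Continuous fun x : E => exp (-I * ((⟪η, x⟫ : ℝ) : ℂ))).aestronglyMeasurable
    (.of_forall fun _ => (norm_exp_neg_I_mul_ofReal _).le)

theorem integral_exp_neg_I_inner_mul_tsum_mul [Countable ι] (ha : Summable a) (ω : ι → E)
    (hf : Integrable f μ) (η : E) :
    ∫ x, exp (-I * ((⟪η, x⟫ : ℝ) : ℂ)) * ((∑' k, a k * exp (I * ((⟪ω k, x⟫ : ℝ) : ℂ))) * f x) ∂μ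
      = ∑' k, a k * ∫ x, exp (-I * ((⟪η - ω k, x⟫ : ℝ) : ℂ)) * f x ∂μ := by
  have hterm (x : E) (k : ι) :
      exp (-I * ((⟪η, x⟫ : ℝ) : ℂ)) * (a k * exp (I * ((⟪ω k, x⟫ : ℝ) : ℂ)) * f x)
        = a k * (exp (-I * ((⟪η - ω k, x⟫ : ℝ) : ℂ)) * f x) := by
    rw [inner_sub_left, ofReal_sub, mul_sub, sub_eq_add_neg, Complex.exp_add]
    ring_nf
  simp_rw [← tsum_mul_right, ← tsum_mul_left, hterm]
  rw [← integral_tsum_of_summable_integral_norm]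
  · simp_rw [integral_const_mul]
  · exact fun k => (hf.exp_neg_I_inner_mul _).const_mul _
  · simp_rw [norm_mul, norm_exp_neg_I_mul_ofReal, one_mul, integral_const_mul]
    exact (summable_norm_iff.mpr ha).mul_right _

theorem integral_exp_neg_I_inner_mul_tsum_mul_shift {G : Type*} [AddGroup G] [Countable G]
    {c : G → ℂ} (hc : Summable c) (ω : G →+ E) (hf : Integrable f μ) (ξ : E) (g : G) :
    ∫ x, exp (-I * ((⟪ξ + ω g, x⟫ : ℝ) : ℂ)) *
        ((∑' k, c k * exp (I * ((⟪ω k, x⟫ : ℝ) : ℂ))) * f x) ∂μ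
      = ∑' k, c (g - k) * ∫ x, exp (-I * ((⟪ξ + ω k, x⟫ : ℝ) : ℂ)) * f x ∂μ := by
  rw [integral_exp_neg_I_inner_mul_tsum_mul hc ω hf, ← (Equiv.subLeft g).tsum_eq]
  refine tsum_congr fun k => ?_
  rw [Equiv.subLeft_apply, map_sub, add_sub_assoc, sub_sub_cancel]

theorem integral_exp_neg_I_inner_mul_eq_fourier [FiniteDimensional ℝ E] (f : E → ℂ) (η : E) :
    ∫ x, exp (-I * ((⟪η, x⟫ : ℝ) : ℂ)) * f x = 𝓕 f ((2 * π)⁻¹ • η) := by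
  rw [Real.fourier_eq']
  congr 1 with x
  rw [smul_eq_mul, real_inner_smul_right, real_inner_comm]
  congr 2
  field_simp
  push_cast
  ring

end Character

theorem Summable.sub_left_mul_of_norm_le {G : Type*} [AddGroup G] {c T : G → ℂ}
    (hc : Summable c) {C : ℝ} (hT : ∀ k, ‖T k‖ ≤ C) (g : G) :
    Summable fun k => c (g - k) * T k := by
  refine .of_norm_bounded
    (((Equiv.subLeft g).summable_iff.mpr (summable_norm_iff.mpr hc)).mul_right C) fun k => ?_
  rw [norm_mul]
  exact mul_le_mul_of_nonneg_left (hT k) (norm_nonneg _)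

section Laplacian

variable {V : Type*} [NormedAddCommGroup V] [InnerProductSpace ℝ V] [FiniteDimensional ℝ V]
  [MeasurableSpace V] [BorelSpace V]

theorem SchwartzMap.fourier_laplacian_apply {F : Type*} [NormedAddCommGroup F] [NormedSpace ℂ F]
    [CompleteSpace F] (f : SchwartzMap V F) (w : V) :
    𝓕 (⇑(Δ f : SchwartzMap V F)) w = (-(2 * π) ^ 2 * ‖w‖ ^ 2 : ℝ) • 𝓕 (⇑f) w := by
  rw [← fourier_coe, ← fourier_coe, laplacian_eq_fourierMultiplierCLM, fourier_smul,
    fourierMultiplierCLM_apply, fourier_fourierInv_eq, smul_apply,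
    smulLeftCLM_apply_apply (by fun_prop)]
  simp [smul_smul]

theorem SchwartzMap.integral_exp_neg_I_inner_mul_laplacian (ψ : SchwartzMap V ℂ) (η : V) :
    ∫ x, exp (-I * ((⟪η, x⟫ : ℝ) : ℂ)) * (Δ ψ : SchwartzMap V ℂ) x
      = -((‖η‖ ^ 2 : ℝ) : ℂ) * ∫ x, exp (-I * ((⟪η, x⟫ : ℝ) : ℂ)) * ψ x := by
  rw [integral_exp_neg_I_inner_mul_eq_fourier, integral_exp_neg_I_inner_mul_eq_fourier,
    fourier_laplacian_apply, norm_smul, Real.norm_of_nonneg (by positivity), real_smul]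
  congr 1
  field_simp
  push_cast
  ring

theorem laplacian_eq_schwartzMap_laplacian {d : ℕ}
    (ψ : SchwartzMap (EuclideanSpace ℝ (Fin d)) ℂ) :
    laplacian ⇑ψ = ⇑(Δ ψ : SchwartzMap (EuclideanSpace ℝ (Fin d)) ℂ) := by
  have hderiv (v : EuclideanSpace ℝ (Fin d)) :
      ⇑(LineDeriv.lineDerivOp v ψ) = fun y => fderiv ℝ ψ y v :=
    funext (SchwartzMap.lineDerivOp_apply_eq_fderiv v ψ)
  ext x
  simp [laplacian, SchwartzMap.laplacian_eq_sum (EuclideanSpace.basisFun (Fin d) ℝ),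
    SchwartzMap.lineDerivOp_apply_eq_fderiv, hderiv]

end Laplacian

section Modes

variable (d : ℕ) (ε : ℝ)

theorem intVec_add (n n' : Fin d → ℤ) : intVec d (n + n') = intVec d n + intVec d n' := by
  ext i
  simp [intVec]

def modeFreq : (Fin d → ℤ) × (Fin d → ℤ) →+ EuclideanSpace ℝ (Fin d) :=
  AddMonoidHom.mk' (fun k => (2 * π) • intVec d k.1 + (2 * π * (1 + ε)) • intVec d k.2)
    fun k k' => by
      simp only [Prod.fst_add, Prod.snd_add, intVec_add, smul_add]
      abel

theorem modeFreq_apply (k : (Fin d → ℤ) × (Fin d → ℤ)) :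
    modeFreq d ε k = (2 * π) • intVec d k.1 + (2 * π * (1 + ε)) • intVec d k.2 :=
  rfl

theorem inner_modeFreq (k : (Fin d → ℤ) × (Fin d → ℤ)) (x : EuclideanSpace ℝ (Fin d)) :
    2 * π * ⟪intVec d k.1, x⟫ + 2 * π * ⟪intVec d k.2, (1 + ε) • x⟫ = ⟪modeFreq d ε k, x⟫ := by
  simp only [modeFreq_apply, inner_add_left, real_inner_smul_left, real_inner_smul_right]
  ring

end Modes

theorem stmt_3_general (d : ℕ) (ε : ℝ)
    (ψ : SchwartzMap (EuclideanSpace ℝ (Fin d)) ℂ)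
    (c : (Fin d → ℤ) × (Fin d → ℤ) → ℂ) (hc : Summable c)
    (V : EuclideanSpace ℝ (Fin d) → EuclideanSpace ℝ (Fin d) → ℂ)
    (hV : ∀ x₁ x₂ : EuclideanSpace ℝ (Fin d),
      V x₁ x₂ = ∑' nm : (Fin d → ℤ) × (Fin d → ℤ),
        c nm * Complex.exp (Complex.I *
          ((2 * π * ⟪intVec d nm.1, x₁⟫ + 2 * π * ⟪intVec d nm.2, x₂⟫ : ℝ) : ℂ)))
    (Fψ : EuclideanSpace ℝ (Fin d) → ℂ)
    (hFψ : ∀ ξ : EuclideanSpace ℝ (Fin d),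
      Fψ ξ = ∫ x : EuclideanSpace ℝ (Fin d),
        Complex.exp (-Complex.I * ((⟪ξ, x⟫ : ℝ) : ℂ)) * ψ x)
    (ξ : EuclideanSpace ℝ (Fin d))
    (T : (Fin d → ℤ) × (Fin d → ℤ) → ℂ)
    (hT : ∀ nm : (Fin d → ℤ) × (Fin d → ℤ),
      T nm = Fψ (ξ + (2 * π) • intVec d nm.1 + (2 * π * (1 + ε)) • intVec d nm.2))
    (n m : Fin d → ℤ) :
    Summable (fun nm' : (Fin d → ℤ) × (Fin d → ℤ) =>
      c (n - nm'.1, m - nm'.2) * T nm') ∧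
    (∫ x : EuclideanSpace ℝ (Fin d),
        Complex.exp (-Complex.I *
            ((⟪ξ + (2 * π) • intVec d n + (2 * π * (1 + ε)) • intVec d m, x⟫ : ℝ) : ℂ)) *
          (-(1 / 2 : ℂ) * laplacian (⇑ψ) x + V x ((1 + ε) • x) * ψ x))
      = (1 / 2 : ℂ) *
          ((‖ξ + (2 * π) • intVec d n + (2 * π * (1 + ε)) • intVec d m‖ ^ 2 : ℝ) : ℂ) *
          T (n, m) +
        ∑' nm' : (Fin d → ℤ) × (Fin d → ℤ), c (n - nm'.1, m - nm'.2) * T nm' := by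
  have hT' (k) : T k = Fψ (ξ + modeFreq d ε k) := by rw [hT, modeFreq_apply, add_assoc]
  have hVdiag (x : EuclideanSpace ℝ (Fin d)) :
      V x ((1 + ε) • x) = ∑' k, c k * exp (I * ((⟪modeFreq d ε k, x⟫ : ℝ) : ℂ)) := by
    simp only [hV, inner_modeFreq]
  refine ⟨hc.sub_left_mul_of_norm_le (fun k => by
    rw [hT, hFψ]
    exact norm_integral_exp_neg_I_inner_mul_le _) (n, m), ?_⟩
  set η := ξ + (2 * π) • intVec d n + (2 * π * (1 + ε)) • intVec d m
  have hη : η = ξ + modeFreq d ε (n, m) := by rw [modeFreq_apply, ← add_assoc]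
  have hψ := ψ.integrable (μ := volume)
  have hkinetic : ∫ x, exp (-I * ((⟪η, x⟫ : ℝ) : ℂ)) * (-(1 / 2 : ℂ) * laplacian (⇑ψ) x)
      = (1 / 2 : ℂ) * ((‖η‖ ^ 2 : ℝ) : ℂ) * T (n, m) := by
    simp_rw [laplacian_eq_schwartzMap_laplacian, mul_left_comm _ (-(1 / 2 : ℂ))]
    rw [integral_const_mul, SchwartzMap.integral_exp_neg_I_inner_mul_laplacian, hT, hFψ]
    ring
  have hpotential : ∫ x, exp (-I * ((⟪η, x⟫ : ℝ) : ℂ)) * (V x ((1 + ε) • x) * ψ x)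
      = ∑' k : (Fin d → ℤ) × (Fin d → ℤ), c (n - k.1, m - k.2) * T k := by
    simp_rw [hVdiag, hη, integral_exp_neg_I_inner_mul_tsum_mul_shift hc _ hψ, hT', hFψ]
    rfl
  simp_rw [mul_add]
  rw [integral_add, hkinetic, hpotential]
  · simp_rw [laplacian_eq_schwartzMap_laplacian]
    exact (((Δ ψ : SchwartzMap _ ℂ).integrable.const_mul _).exp_neg_I_inner_mul _)
  · simp_rw [hVdiag]
    exact (hψ.tsum_mul_exp_I_inner_mul hc _).exp_neg_I_inner_mul _

/-- The unfolding map intertwines the Fourier transform of the incommensurate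
Hamiltonian `H_ε = -½Δ + V(x,(1+ε)x)` with the lattice operator `Ĥ_ε(ξ)`:
for every `(n,m)`,
`ℱ(H_ε ψ)(ξ + 2πn + 2π(1+ε)m) = ½|ξ + 2πn + 2π(1+ε)m|² (𝒯_ξ ψ̂)(n,m)
 + ∑_{(n',m')} c(n-n',m-m') (𝒯_ξ ψ̂)(n',m')`, the series being absolutely
convergent. -/
theorem stmt_3 (d : ℕ) (hd : 1 ≤ d) (ε : ℝ)
    (ψ : SchwartzMap (EuclideanSpace ℝ (Fin d)) ℂ)
    (c : (Fin d → ℤ) × (Fin d → ℤ) → ℂ) (hc : Summable c)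
    (V : EuclideanSpace ℝ (Fin d) → EuclideanSpace ℝ (Fin d) → ℂ)
    (hV : ∀ x₁ x₂ : EuclideanSpace ℝ (Fin d),
      V x₁ x₂ = ∑' nm : (Fin d → ℤ) × (Fin d → ℤ),
        c nm * Complex.exp (Complex.I *
          ((2 * π * ⟪intVec d nm.1, x₁⟫ + 2 * π * ⟪intVec d nm.2, x₂⟫ : ℝ) : ℂ)))
    (Fψ : EuclideanSpace ℝ (Fin d) → ℂ)
    (hFψ : ∀ ξ : EuclideanSpace ℝ (Fin d),
      Fψ ξ = ∫ x : EuclideanSpace ℝ (Fin d),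
        Complex.exp (-Complex.I * ((⟪ξ, x⟫ : ℝ) : ℂ)) * ψ x)
    (ξ : EuclideanSpace ℝ (Fin d))
    (T : (Fin d → ℤ) × (Fin d → ℤ) → ℂ)
    (hT : ∀ nm : (Fin d → ℤ) × (Fin d → ℤ),
      T nm = Fψ (ξ + (2 * π) • intVec d nm.1 + (2 * π * (1 + ε)) • intVec d nm.2))
    (n m : Fin d → ℤ) :
    Summable (fun nm' : (Fin d → ℤ) × (Fin d → ℤ) =>
      c (n - nm'.1, m - nm'.2) * T nm') ∧
    (∫ x : EuclideanSpace ℝ (Fin d),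
        Complex.exp (-Complex.I *
            ((⟪ξ + (2 * π) • intVec d n + (2 * π * (1 + ε)) • intVec d m, x⟫ : ℝ) : ℂ)) *
          (-(1 / 2 : ℂ) * laplacian (⇑ψ) x + V x ((1 + ε) • x) * ψ x))
      = (1 / 2 : ℂ) *
          ((‖ξ + (2 * π) • intVec d n + (2 * π * (1 + ε)) • intVec d m‖ ^ 2 : ℝ) : ℂ) *
          T (n, m) +
        ∑' nm' : (Fin d → ℤ) × (Fin d → ℤ), c (n - nm'.1, m - nm'.2) * T nm' :=
  stmt_3_general d ε ψ c hc V hV Fψ hFψ ξ T hT n m
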